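/- Let X be a measurable space, let κ and η be Markov kernels from X to X, let γ ∈ [0,1), let r : X → ℝ be a bounded measurable reward with 0 ≤ r ≤ r_max, and let μ₀ be a probability measure on X. Define V_κ(x) := Σ_{n≥0} γ^n E_{P^κ_x}[r(X_n)] and J(κ) := ∫ V_κ dμ₀, and let μ^η_t denote the law of X_t under the η-chain started from μ₀. Let u : X → ℝ be a bounded measurable function with u ≥ 0 such that ∫ V_κ(y) η(x, dy) − ∫ V_κ(y) κ(x, dy) ≤ u(x) for all x ∈ X, and let λ ≥ γ. Define the uncertainty-penalized value J̃(η) := Σ_{t≥0} γ^t ∫ (r − λ·u) dμ^η_t. Then J̃(η) ≤ J(κ). -/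

import Mathlib

/-!
The value `V = V_κ` satisfies the Bellman equation `V = r + γ κV`. Along the `η`-chain put
`a_t = γ^t ∫ V dμ^η_t`; then `a_t - a_{t+1} = γ^t ∫ (V - γ ηV) dμ^η_t = γ^t ∫ (r - γ (ηV - κV)) dμ^η_t`,
which dominates `γ^t ∫ (r - λ u) dμ^η_t` because `ηV - κV ≤ u` and `γ u ≤ λ u`. Summing, the
penalized value is at most `a_0 - a_T ≤ a_0 = J(κ)`, as `V ≥ 0`.
-/

open MeasureTheory ProbabilityTheory

/-- The `n`-step transition kernel of a time-homogeneous Markov chain with one-step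
kernel `κ`; under the Ionescu–Tulcea trajectory measure `P^κ_x`, the law of `X n` is
`kIter κ n x`. -/
noncomputable def kIter {X : Type*} [MeasurableSpace X] (κ : Kernel X X) : ℕ → Kernel X X
  | 0 => Kernel.id
  | n + 1 => κ ∘ₖ kIter κ n

/-- The discounted value `V_κ(x) = Σ_{n≥0} γ^n E_{P^κ_x}[r(X_n)]`. -/
noncomputable def discVal {X : Type*} [MeasurableSpace X] (κ : Kernel X X) (γ : ℝ)
    (r : X → ℝ) (x : X) : ℝ :=
  ∑' n : ℕ, γ ^ n * ∫ y, r y ∂(kIter κ n x)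

/-- The objective `J(κ) = ∫ V_κ dμ₀`. -/
noncomputable def discJ {X : Type*} [MeasurableSpace X] (κ : Kernel X X) (γ : ℝ)
    (r : X → ℝ) (μ₀ : Measure X) : ℝ :=
  ∫ x, discVal κ γ r x ∂μ₀

/-- The law `μ^η_t` of `X_t` under the `η`-chain started from `μ₀`. -/
noncomputable def marginal {X : Type*} [MeasurableSpace X] (η : Kernel X X)
    (μ₀ : Measure X) (t : ℕ) : Measure X :=
  μ₀.bind (kIter η t)

section Series

variable {γ : ℝ} {b : ℕ → ℝ} {B : ℝ}

lemma norm_geometric_mul_le (hγ0 : 0 ≤ γ) (hb : ∀ n, |b n| ≤ B) (n : ℕ) :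
    ‖γ ^ n * b n‖ ≤ γ ^ n * B := by
  rw [Real.norm_eq_abs, abs_mul, abs_of_nonneg (pow_nonneg hγ0 n)]
  exact mul_le_mul_of_nonneg_left (hb n) (pow_nonneg hγ0 n)

lemma summable_geometric_mul_of_abs_le (hγ0 : 0 ≤ γ) (hγ1 : γ < 1) (hb : ∀ n, |b n| ≤ B) :
    Summable fun n ↦ γ ^ n * b n :=
  .of_norm_bounded ((summable_geometric_of_lt_one hγ0 hγ1).mul_right B)
    (norm_geometric_mul_le hγ0 hb)

lemma abs_tsum_geometric_mul_le (hγ0 : 0 ≤ γ) (hγ1 : γ < 1) (hb : ∀ n, |b n| ≤ B) :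
    |∑' n, γ ^ n * b n| ≤ (1 - γ)⁻¹ * B :=
  tsum_of_norm_bounded ((hasSum_geometric_of_lt_one hγ0 hγ1).mul_right B)
    (norm_geometric_mul_le hγ0 hb)

lemma tsum_le_of_le_sub_succ {f a : ℕ → ℝ} (hf : Summable f) (hfa : ∀ t, f t ≤ a t - a (t + 1))
    (ha : ∀ t, 0 ≤ a t) : ∑' t, f t ≤ a 0 :=
  hf.tsum_le_of_sum_range_le fun T ↦ calc
    ∑ t ∈ Finset.range T, f t ≤ ∑ t ∈ Finset.range T, (a t - a (t + 1)) :=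
      Finset.sum_le_sum fun t _ ↦ hfa t
    _ = a 0 - a T := Finset.sum_range_sub' a T
    _ ≤ a 0 := sub_le_self _ (ha T)

end Series

lemma measurable_tsum_of_summable {α : Type*} [MeasurableSpace α] {f : ℕ → α → ℝ}
    (hf : ∀ n, Measurable (f n)) (hs : ∀ x, Summable fun n ↦ f n x) :
    Measurable fun x ↦ ∑' n, f n x :=
  measurable_of_tendsto_metrizable (fun T ↦ Finset.measurable_sum (Finset.range T) fun n _ ↦ hf n)
    (tendsto_pi_nhds.2 fun x ↦ (hs x).hasSum.tendsto_sum_nat)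

section Integral

variable {α β : Type*} [MeasurableSpace α] [MeasurableSpace β]

lemma abs_integral_le_of_forall_abs_le {μ : Measure α} [IsProbabilityMeasure μ] {f : α → ℝ}
    {C : ℝ} (hf : ∀ x, |f x| ≤ C) : |∫ x, f x ∂μ| ≤ C := by
  simpa using norm_integral_le_of_norm_le_const (μ := μ) (f := f) (.of_forall hf)

lemma integrable_of_forall_abs_le {μ : Measure α} [IsFiniteMeasure μ] {f : α → ℝ} {C : ℝ}
    (hf : Measurable f) (hC : ∀ x, |f x| ≤ C) : Integrable f μ :=
  .of_bound hf.aestronglyMeasurable C (.of_forall hC)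

lemma measurable_integral_kernel (κ : Kernel α β) [IsSFiniteKernel κ] {f : β → ℝ}
    (hf : Measurable f) : Measurable fun x ↦ ∫ y, f y ∂κ x :=
  hf.stronglyMeasurable.integral_kernel.measurable

lemma integral_bind_kernel (μ : Measure α) [SFinite μ] (κ : Kernel α β) [IsSFiniteKernel κ]
    {f : β → ℝ} (hf : Integrable f (μ.bind κ)) :
    ∫ y, f y ∂(μ.bind κ) = ∫ x, ∫ y, f y ∂κ x ∂μ := by
  rw [Measure.comp_eq_comp_const_apply] at hf ⊢
  exact Kernel.integral_comp hf

lemma integral_tsum_geometric_mul {γ : ℝ} (hγ0 : 0 ≤ γ) (hγ1 : γ < 1) (μ : Measure α)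
    [IsProbabilityMeasure μ] {g : ℕ → α → ℝ} (hg : ∀ n, Measurable (g n)) {B : ℝ}
    (hgB : ∀ n x, |g n x| ≤ B) :
    ∫ x, ∑' n, γ ^ n * g n x ∂μ = ∑' n, γ ^ n * ∫ x, g n x ∂μ := by
  simp_rw [← integral_const_mul]
  refine (integral_tsum_of_summable_integral_norm
    (fun n ↦ (integrable_of_forall_abs_le (hg n) (hgB n)).const_mul _) ?_).symm
  simp_rw [norm_mul, integral_const_mul, norm_pow, Real.norm_of_nonneg hγ0]
  exact summable_geometric_mul_of_abs_le hγ0 hγ1 fun n ↦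
    abs_integral_le_of_forall_abs_le (C := B) fun x ↦ by simpa using hgB n x

end Integral

section MarkovChain

variable {X : Type*} [MeasurableSpace X]

instance isMarkovKernel_kIter (κ : Kernel X X) [IsMarkovKernel κ] (n : ℕ) :
    IsMarkovKernel (kIter κ n) := by
  induction n with
  | zero => rw [kIter]; infer_instance
  | succ n ih => rw [kIter]; infer_instance

lemma kIter_succ' (κ : Kernel X X) [IsSFiniteKernel κ] (n : ℕ) :
    kIter κ (n + 1) = kIter κ n ∘ₖ κ := by
  induction n with
  | zero => exact (Kernel.comp_id κ).trans (Kernel.id_comp κ).symm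
  | succ n ih =>
    calc kIter κ (n + 2) = κ ∘ₖ (kIter κ n ∘ₖ κ) := by rw [kIter, ih]
      _ = kIter κ (n + 1) ∘ₖ κ := by rw [← Kernel.comp_assoc]; rfl

lemma marginal_zero (η : Kernel X X) (μ₀ : Measure X) : marginal η μ₀ 0 = μ₀ :=
  Measure.id_comp

lemma marginal_succ (η : Kernel X X) (μ₀ : Measure X) (t : ℕ) :
    marginal η μ₀ (t + 1) = (marginal η μ₀ t).bind η :=
  (Measure.comp_assoc (κ := kIter η t) (η := η)).symm

instance (η : Kernel X X) [IsMarkovKernel η] (μ₀ : Measure X) [IsProbabilityMeasure μ₀] (t : ℕ) :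
    IsProbabilityMeasure (marginal η μ₀ t) := by
  rw [marginal]; infer_instance

end MarkovChain

section DiscountedValue

variable {X : Type*} [MeasurableSpace X] (κ : Kernel X X) {γ : ℝ} {r : X → ℝ} {R : ℝ}

lemma discVal_nonneg (hγ0 : 0 ≤ γ) (hr0 : ∀ x, 0 ≤ r x) (x : X) : 0 ≤ discVal κ γ r x :=
  tsum_nonneg fun n ↦ mul_nonneg (pow_nonneg hγ0 n) (integral_nonneg hr0)

variable [IsMarkovKernel κ]

lemma abs_integral_kIter_le (hrR : ∀ x, |r x| ≤ R) (n : ℕ) (x : X) :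
    |∫ y, r y ∂kIter κ n x| ≤ R :=
  abs_integral_le_of_forall_abs_le hrR

lemma integral_kIter_succ (hr : Measurable r) (hrR : ∀ x, |r x| ≤ R) (n : ℕ) (x : X) :
    ∫ y, r y ∂kIter κ (n + 1) x = ∫ y, ∫ z, r z ∂kIter κ n y ∂κ x := by
  rw [kIter_succ', Kernel.integral_comp (integrable_of_forall_abs_le hr hrR)]

lemma measurable_discVal (hγ0 : 0 ≤ γ) (hγ1 : γ < 1) (hr : Measurable r)
    (hrR : ∀ x, |r x| ≤ R) : Measurable (discVal κ γ r) :=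
  measurable_tsum_of_summable (fun _ ↦ (measurable_integral_kernel _ hr).const_mul _)
    fun x ↦ summable_geometric_mul_of_abs_le hγ0 hγ1 (abs_integral_kIter_le κ hrR · x)

lemma abs_discVal_le (hγ0 : 0 ≤ γ) (hγ1 : γ < 1) (hrR : ∀ x, |r x| ≤ R) (x : X) :
    |discVal κ γ r x| ≤ (1 - γ)⁻¹ * R :=
  abs_tsum_geometric_mul_le hγ0 hγ1 (abs_integral_kIter_le κ hrR · x)

theorem discVal_eq_add_integral (hγ0 : 0 ≤ γ) (hγ1 : γ < 1) (hr : Measurable r)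
    (hrR : ∀ x, |r x| ≤ R) (x : X) :
    discVal κ γ r x = r x + γ * ∫ y, discVal κ γ r y ∂κ x := by
  unfold discVal
  rw [(summable_geometric_mul_of_abs_le hγ0 hγ1 (abs_integral_kIter_le κ hrR · x)).tsum_eq_zero_add,
    integral_tsum_geometric_mul hγ0 hγ1 (κ x) (fun n ↦ measurable_integral_kernel _ hr)
      (abs_integral_kIter_le κ hrR), ← tsum_mul_left]
  congr 1
  · simp [kIter, Kernel.id_apply, integral_dirac' _ _ hr.stronglyMeasurable]
  · congr 1 with n
    rw [integral_kIter_succ κ hr hrR, pow_succ]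
    ring

end DiscountedValue

theorem integral_penalized_reward_le {X : Type*} [MeasurableSpace X] (κ η : Kernel X X)
    [IsMarkovKernel κ] [IsMarkovKernel η] {γ : ℝ} (hγ0 : 0 ≤ γ) (hγ1 : γ < 1)
    {r : X → ℝ} (hr : Measurable r) {R : ℝ} (hrR : ∀ x, |r x| ≤ R)
    {u : X → ℝ} (hum : Measurable u) {C : ℝ} (huC : ∀ x, |u x| ≤ C) (hu0 : ∀ x, 0 ≤ u x)
    (hu : ∀ x, (∫ y, discVal κ γ r y ∂(η x)) - (∫ y, discVal κ γ r y ∂(κ x)) ≤ u x)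
    {lam : ℝ} (hlam : γ ≤ lam) (ν : Measure X) [IsProbabilityMeasure ν] :
    ∫ x, (r x - lam * u x) ∂ν
      ≤ ∫ x, discVal κ γ r x ∂ν - γ * ∫ x, discVal κ γ r x ∂(ν.bind η) := by
  set V := discVal κ γ r
  have hVm : Measurable V := measurable_discVal κ hγ0 hγ1 hr hrR
  have hV (μ : Measure X) [IsFiniteMeasure μ] : Integrable V μ :=
    integrable_of_forall_abs_le hVm (abs_discVal_le κ hγ0 hγ1 hrR)
  have hηV : Integrable (fun x ↦ ∫ y, V y ∂η x) ν :=
    integrable_of_forall_abs_le (measurable_integral_kernel η hVm)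
      fun _ ↦ abs_integral_le_of_forall_abs_le (abs_discVal_le κ hγ0 hγ1 hrR)
  rw [integral_bind_kernel ν η (hV _), ← integral_const_mul, ← integral_sub (hV ν)
    (hηV.const_mul γ)]
  refine integral_mono ((integrable_of_forall_abs_le hr hrR).sub
    ((integrable_of_forall_abs_le hum huC).const_mul lam)) ((hV ν).sub (hηV.const_mul γ))
    fun x ↦ ?_
  have hbellman := discVal_eq_add_integral κ hγ0 hγ1 hr hrR x
  have hgap := mul_le_mul_of_nonneg_left (hu x) hγ0
  have hpenalty := mul_le_mul_of_nonneg_right hlam (hu0 x)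
  dsimp only
  linarith

/-- **Conservatism of the uncertainty-penalized MDP** (the paper's Lemma 4, after Yu et
al.): if `u ≥ 0` bounds the one-step value-prediction gap and `λ ≥ γ`, then the
uncertainty-penalized value `J̃(η) = Σ_{t≥0} γ^t ∫ (r − λ u) dμ^η_t` satisfies
`J̃(η) ≤ J(κ)`. -/
theorem stmt9 {X : Type*} [MeasurableSpace X]
    (κ η : Kernel X X) [IsMarkovKernel κ] [IsMarkovKernel η]
    (γ : ℝ) (hγ0 : 0 ≤ γ) (hγ1 : γ < 1)
    (r : X → ℝ) (hr : Measurable r)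
    (rmax : ℝ) (hr0 : ∀ x, 0 ≤ r x) (hrmax : ∀ x, r x ≤ rmax)
    (μ₀ : Measure X) [IsProbabilityMeasure μ₀]
    (u : X → ℝ) (hum : Measurable u) (hub : ∃ C, ∀ x, |u x| ≤ C) (hu0 : ∀ x, 0 ≤ u x)
    (hu : ∀ x, (∫ y, discVal κ γ r y ∂(η x)) - (∫ y, discVal κ γ r y ∂(κ x)) ≤ u x)
    (lam : ℝ) (hlam : γ ≤ lam) :
    (∑' t : ℕ, γ ^ t * ∫ x, (r x - lam * u x) ∂(marginal η μ₀ t))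
      ≤ discJ κ γ r μ₀ := by
  obtain ⟨C, hC⟩ := hub
  have hrR : ∀ x, |r x| ≤ rmax := fun x ↦ abs_le.2 ⟨by linarith [hr0 x, hrmax x], hrmax x⟩
  have hpen : ∀ x, |r x - lam * u x| ≤ rmax + |lam| * C := fun x ↦ calc
    |r x - lam * u x| ≤ |r x| + |lam| * |u x| := (abs_sub _ _).trans_eq (by rw [abs_mul])
    _ ≤ rmax + |lam| * C := by gcongr; exacts [hrR x, hC x]
  set a : ℕ → ℝ := fun t ↦ γ ^ t * ∫ x, discVal κ γ r x ∂marginal η μ₀ t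
  calc _ ≤ a 0 := tsum_le_of_le_sub_succ
        (summable_geometric_mul_of_abs_le hγ0 hγ1 fun t ↦ abs_integral_le_of_forall_abs_le hpen)
        (fun t ↦ ?_)
        (fun t ↦ mul_nonneg (pow_nonneg hγ0 t) (integral_nonneg (discVal_nonneg κ hγ0 hr0)))
    _ = discJ κ γ r μ₀ := by simp [a, marginal_zero, discJ]
  calc γ ^ t * ∫ x, (r x - lam * u x) ∂marginal η μ₀ t
      ≤ γ ^ t * (∫ x, discVal κ γ r x ∂marginal η μ₀ t
          - γ * ∫ x, discVal κ γ r x ∂(marginal η μ₀ t).bind η) :=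
        mul_le_mul_of_nonneg_left (integral_penalized_reward_le κ η hγ0 hγ1 hr hrR hum hC hu0 hu
          hlam _) (pow_nonneg hγ0 t)
    _ = a t - a (t + 1) := by simp only [a, marginal_succ, pow_succ]; ring
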